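/- arXiv:1306.4683 — 3 statements merged into one kernel-verified Lean document; each statement's English description precedes it below -/
import Mathlib

section
/- Let {ρ_i}_{i=1}^k be density matrices on a d-dimensional complex Hilbert space, prepared with probabilities p_i, and write ρ̃_i = p_i ρ_i. For a permutation ε of {1,…,k}, define N_ε iteratively by N_ε^{(2)} = min(ρ̃_{ε(2)}, ρ̃_{ε(1)}) and N_ε^{(j)} = min(ρ̃_{ε(j)}, N_ε^{(j−1)}) for 3 ≤ j ≤ k, and set N_ε = N_ε^{(k)}, where min(A,B) = (1/2)(A + B − |A−B|) and |X| = (X²)^{1/2}. Then for every measurement (POVM) {M_i}_{i=1}^k and every permutation ε, ∑_{i=1}^k tr(ρ̃_i M_i) ≥ tr(N_ε). (Theorem 3.) -/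
/-! For Hermitian `A, B` one has `A - min(A,B) = (A-B)⁺` and `B - min(A,B) = (A-B)⁻`, so `min(A,B)`
is a lower bound of both `A` and `B` in the Loewner order, and by induction `N_ε ≤ ρ̃_i` for every
`i`. As `tr(X M) ≥ 0` for positive semidefinite `X, M`, this gives
`tr N_ε = ∑ tr(N_ε M_i) ≤ ∑ tr(ρ̃_i M_i)`. -/

open Matrix BigOperators ComplexOrder Classical

/-- The positive semidefinite square root of a matrix (junk value `0` if the
matrix is not positive semidefinite). -/
noncomputable def psqrt {d : ℕ} (A : Matrix (Fin d) (Fin d) ℂ) :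
    Matrix (Fin d) (Fin d) ℂ :=
  if h : A.PosSemidef then h.1.eigenvectorUnitary.1 * diagonal ((↑) ∘ (√·) ∘ h.1.eigenvalues) *
    (star h.1.eigenvectorUnitary : Matrix (Fin d) (Fin d) ℂ) else 0

/-- The matrix absolute value `|X| = (X²)^{1/2}` of a Hermitian matrix. -/
noncomputable def matAbs {d : ℕ} (X : Matrix (Fin d) (Fin d) ℂ) :
    Matrix (Fin d) (Fin d) ℂ :=
  psqrt (X * X)

/-- The "minimum" `min(A,B) = (A + B - |A - B|)/2` of two Hermitian matrices. -/
noncomputable def matMin {d : ℕ} (A B : Matrix (Fin d) (Fin d) ℂ) :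
    Matrix (Fin d) (Fin d) ℂ :=
  (1 / 2 : ℂ) • (A + B - matAbs (A - B))

/-- Iterated minimum: `iterMin [A_k, ..., A_1] = min(A_k, min(A_{k-1}, ..., min(A_2, A_1)))`. -/
noncomputable def iterMin {d : ℕ} : List (Matrix (Fin d) (Fin d) ℂ) → Matrix (Fin d) (Fin d) ℂ
  | [] => 0
  | [A] => A
  | A :: rest => matMin A (iterMin rest)

open scoped MatrixOrder

namespace Matrix

variable {n 𝕜 : Type*} [Fintype n] [DecidableEq n] [RCLike 𝕜]

lemma trace_mul_nonneg {A B : Matrix n n 𝕜} (hA : 0 ≤ A) (hB : 0 ≤ B) :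
    0 ≤ (A * B).trace := by
  have hsqrt : IsSelfAdjoint (CFC.sqrt A) := (CFC.sqrt_nonneg A).isSelfAdjoint
  calc 0 ≤ (CFC.sqrt A * B * star (CFC.sqrt A)).trace :=
        (hB.posSemidef.mul_mul_conjTranspose_same _).trace_nonneg
    _ = (A * B).trace := by
        rw [hsqrt.star_eq, trace_mul_comm, ← mul_assoc, CFC.sqrt_mul_sqrt_self A hA]

lemma trace_mul_le_trace_mul {A B M : Matrix n n 𝕜} (hAB : A ≤ B) (hM : 0 ≤ M) :
    (A * M).trace ≤ (B * M).trace := by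
  simpa [sub_mul, trace_sub] using trace_mul_nonneg (sub_nonneg.mpr hAB) hM

end Matrix

lemma psqrt_eq_cfcSqrt {d : ℕ} {A : Matrix (Fin d) (Fin d) ℂ} (hA : A.PosSemidef) :
    psqrt A = CFC.sqrt A := by
  rw [psqrt, dif_pos hA, CFC.sqrt_eq_real_sqrt _ hA.nonneg, cfcₙ_eq_cfc (hf0 := Real.sqrt_zero),
    hA.1.cfc_eq]
  rfl

lemma matAbs_eq_cfcAbs {d : ℕ} {X : Matrix (Fin d) (Fin d) ℂ} (hX : X.IsHermitian) :
    matAbs X = CFC.abs X := by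
  have hXX : star X * X = X * X := by rw [star_eq_conjTranspose, hX.eq]
  rw [matAbs, CFC.abs, hXX, psqrt_eq_cfcSqrt]
  simpa [hX.eq] using posSemidef_conjTranspose_mul_self X

section matMin

variable {d : ℕ} {A B : Matrix (Fin d) (Fin d) ℂ}

lemma sub_matMin_left (hA : A.IsHermitian) (hB : B.IsHermitian) :
    A - matMin A B = (A - B)⁺ := by
  have habs := CFC.abs_add_self (A - B) (hA.sub hB).isSelfAdjoint
  rw [matMin, matAbs_eq_cfcAbs (hA.sub hB)]
  linear_combination (norm := module) (1 / 2 : ℂ) • habs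

lemma sub_matMin_right (hA : A.IsHermitian) (hB : B.IsHermitian) :
    B - matMin A B = (A - B)⁻ := by
  have habs := CFC.abs_sub_self (A - B) (hA.sub hB).isSelfAdjoint
  rw [matMin, matAbs_eq_cfcAbs (hA.sub hB)]
  linear_combination (norm := module) (1 / 2 : ℂ) • habs

lemma matMin_le_left (hA : A.IsHermitian) (hB : B.IsHermitian) : matMin A B ≤ A :=
  sub_nonneg.mp (sub_matMin_left hA hB ▸ CFC.posPart_nonneg _)

lemma matMin_le_right (hA : A.IsHermitian) (hB : B.IsHermitian) : matMin A B ≤ B :=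
  sub_nonneg.mp (sub_matMin_right hA hB ▸ CFC.negPart_nonneg _)

lemma isHermitian_matMin (hA : A.IsHermitian) (hB : B.IsHermitian) :
    (matMin A B).IsHermitian := by
  have h := (CFC.posPart_nonneg (A - B)).isSelfAdjoint.isHermitian
  rw [← sub_matMin_left hA hB] at h
  simpa using hA.sub h

end matMin

lemma isHermitian_iterMin {d : ℕ} :
    ∀ {L : List (Matrix (Fin d) (Fin d) ℂ)}, (∀ A ∈ L, A.IsHermitian) → (iterMin L).IsHermitian
  | [], _ => isHermitian_zero
  | [A], h => h A (by simp)
  | A :: B :: rest, h =>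
    isHermitian_matMin (h A (by simp)) (isHermitian_iterMin fun C hC => h C (by simp [hC]))

lemma iterMin_le {d : ℕ} :
    ∀ {L : List (Matrix (Fin d) (Fin d) ℂ)}, (∀ A ∈ L, A.IsHermitian) → ∀ A ∈ L, iterMin L ≤ A
  | [A], _, B, hB => by rw [List.mem_singleton.mp hB]; rfl
  | A :: B :: rest, h, C, hC => by
    have hA : A.IsHermitian := h A (by simp)
    have hrest : ∀ C ∈ B :: rest, C.IsHermitian := fun C hC => h C (by simp [hC])
    rcases List.mem_cons.mp hC with rfl | hC
    · exact matMin_le_left hA (isHermitian_iterMin hrest)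
    · exact (matMin_le_right hA (isHermitian_iterMin hrest)).trans (iterMin_le hrest C hC)

/-- `(List.finRange k).reverse.map _` is `[ρ̃_{ε(k)}, …, ρ̃_{ε(1)}]`, whose `iterMin` is `N_ε`. -/
theorem state_exclusion_min_lower_bound_general
    {d k : ℕ} (ρ : Fin k → Matrix (Fin d) (Fin d) ℂ)
    (hρ : ∀ i, (ρ i).PosSemidef)
    (p : Fin k → ℝ)
    (M : Fin k → Matrix (Fin d) (Fin d) ℂ)
    (hM : ∀ i, (M i).PosSemidef) (hMsum : ∑ i, M i = 1)
    (ε : Equiv.Perm (Fin k)) :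
    (iterMin ((List.finRange k).reverse.map (fun i => (p (ε i) : ℂ) • ρ (ε i)))).trace.re ≤
      (∑ i, ((p i : ℂ) • ρ i * M i).trace).re := by
  set L := (List.finRange k).reverse.map (fun i => (p (ε i) : ℂ) • ρ (ε i)) with hL
  have hL_herm : ∀ A ∈ L, A.IsHermitian := by
    simp only [hL, List.mem_map]
    rintro _ ⟨i, -, rfl⟩
    exact (hρ (ε i)).1.smul (Complex.conj_ofReal _)
  have hmem (j : Fin k) : (p j : ℂ) • ρ j ∈ L := List.mem_map.mpr ⟨ε⁻¹ j, by simp, by simp⟩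
  have htr : (iterMin L).trace = ∑ j, (iterMin L * M j).trace := by
    rw [← trace_sum, ← Finset.mul_sum, hMsum, mul_one]
  rw [htr]
  refine (Complex.le_def.mp (Finset.sum_le_sum fun j _ => ?_)).1
  exact trace_mul_le_trace_mul (iterMin_le hL_herm _ (hmem j)) (hM j).nonneg

/-- Theorem 3: lower bound on the error probability of state exclusion.
`N_ε = min(ρ̃_{ε(k)}, min(ρ̃_{ε(k-1)}, ..., min(ρ̃_{ε(2)}, ρ̃_{ε(1)})))`. -/
theorem state_exclusion_min_lower_bound
    {d k : ℕ} (ρ : Fin k → Matrix (Fin d) (Fin d) ℂ)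
    (hρ : ∀ i, (ρ i).PosSemidef) (hρtr : ∀ i, (ρ i).trace = 1)
    (p : Fin k → ℝ) (hp : ∀ i, 0 ≤ p i) (hpsum : ∑ i, p i = 1)
    (M : Fin k → Matrix (Fin d) (Fin d) ℂ)
    (hM : ∀ i, (M i).PosSemidef) (hMsum : ∑ i, M i = 1)
    (ε : Equiv.Perm (Fin k)) :
    (iterMin ((List.finRange k).reverse.map (fun i => (p (ε i) : ℂ) • ρ (ε i)))).trace.re ≤
      (∑ i, ((p i : ℂ) • ρ i * M i).trace).re :=
  state_exclusion_min_lower_bound_general ρ hρ p M hM hMsum ε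
end

section
/- Let {ρ_i}_{i=1}^k be density matrices on a d-dimensional complex Hilbert space with k ≥ 3, and define ρ̂_j = (1/(k−1)) ∑_{i≠j} ρ_i. If F(ρ̂_j, ρ̂_l) = (k−2)/(k−1) for all j ≠ l, then the set {ρ_i} is pairwise orthogonal: tr(ρ_j ρ_l) = 0 for all j ≠ l. -/
open Matrix BigOperators ComplexOrder Classical

/-- The fidelity `F(ρ,σ) = tr((√ρ σ √ρ)^{1/2})` of two positive semidefinite
matrices. -/
noncomputable def fidelity {d : ℕ} (ρ σ : Matrix (Fin d) (Fin d) ℂ) : ℝ :=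
  (psqrt (psqrt ρ * σ * psqrt ρ)).trace.re

/-!
Split the two mixtures as `ρ̂ⱼ = A + B` and `ρ̂ₗ = A + C` with `A = (k-1)⁻¹ ∑_{i ≠ j, l} ρᵢ`,
`B = ρₗ / (k-1)`, `C = ρⱼ / (k-1)`. Then `tr A = (k-2)/(k-1)`, so the hypothesis says
`F(A + B, A + C) = tr A`.

On the other hand `F(A + B, A + C) ≥ tr A + tr(√B √C)`. For `A + B` invertible, put
`P = √(A + B)` and `Z = P (A + √C √B) P⁻¹`. The Gram matrix of the block columns `[√A; √B]`
and `[√A; √C]` is positive semidefinite, and its Schur complement gives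
`(A + √C √B) (A + B)⁻¹ (A + √B √C) ≤ A + C`, i.e. `Z Z* ≤ P (A + C) P`. Finally
`Re tr Z ≤ tr √S` whenever `Z Z* ≤ S`, and `tr Z = tr A + tr(√C √B)`. The invertibility of
`A + B` is removed by continuity of the fidelity in its first argument.

Hence `tr(√B √C) = 0`. For positive semidefinite matrices this forces `√B √C = 0`, hence
`B C = 0`.
-/

open scoped MatrixOrder

namespace Matrix

theorem conjTranspose_mul_inv_mul_le {𝕜 m n p : Type*} [RCLike 𝕜] [Fintype m] [Fintype n]
    [Fintype p] [DecidableEq n] (Y : Matrix n m 𝕜) (X : Matrix m p 𝕜) (hY : (Y * Yᴴ).PosDef) :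
    (Y * X)ᴴ * (Y * Yᴴ)⁻¹ * (Y * X) ≤ Xᴴ * X := by
  have := hY.isUnit.invertible
  have hGram := posSemidef_conjTranspose_mul_self (fromCols Yᴴ X)
  rw [conjTranspose_fromCols_eq_fromRows_conjTranspose, fromRows_mul_fromCols,
    conjTranspose_conjTranspose, ← conjTranspose_mul] at hGram
  exact (hY.fromBlocks₁₁ _ _).mp hGram

variable {n : Type*} [Fintype n] [DecidableEq n]

omit [DecidableEq n] in
theorem trace_star_mul_self_mul_star_mul_self (X Y : Matrix n n ℂ) :
    (star X * X * (star Y * Y)).trace = ((Y * Xᴴ)ᴴ * (Y * Xᴴ)).trace := by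
  simp only [star_eq_conjTranspose, conjTranspose_mul, conjTranspose_conjTranspose,
    Matrix.mul_assoc]
  rw [trace_mul_comm]
  simp only [Matrix.mul_assoc]

theorem PosSemidef.trace_mul_nonneg {P Q : Matrix n n ℂ} (hP : P.PosSemidef)
    (hQ : Q.PosSemidef) : 0 ≤ (P * Q).trace := by
  obtain ⟨X, rfl⟩ := CStarAlgebra.nonneg_iff_eq_star_mul_self.mp hP.nonneg
  obtain ⟨Y, rfl⟩ := CStarAlgebra.nonneg_iff_eq_star_mul_self.mp hQ.nonneg
  rw [trace_star_mul_self_mul_star_mul_self]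
  exact (posSemidef_conjTranspose_mul_self _).trace_nonneg

theorem PosSemidef.mul_eq_zero_of_trace_mul_eq_zero {P Q : Matrix n n ℂ} (hP : P.PosSemidef)
    (hQ : Q.PosSemidef) (h : (P * Q).trace = 0) : P * Q = 0 := by
  obtain ⟨X, rfl⟩ := CStarAlgebra.nonneg_iff_eq_star_mul_self.mp hP.nonneg
  obtain ⟨Y, rfl⟩ := CStarAlgebra.nonneg_iff_eq_star_mul_self.mp hQ.nonneg
  rw [trace_star_mul_self_mul_star_mul_self, trace_conjTranspose_mul_self_eq_zero_iff] at h
  have h' : X * Yᴴ = 0 := by simpa using congrArg (·ᴴ) h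
  simp only [star_eq_conjTranspose, Matrix.mul_assoc]
  rw [← Matrix.mul_assoc X, h', Matrix.zero_mul, Matrix.mul_zero]

omit [Fintype n] in
theorem PosSemidef.posDef_add_smul_one {T : Matrix n n ℂ} (hT : T.PosSemidef) {ε : ℝ}
    (hε : 0 < ε) : (T + (ε : ℂ) • 1).PosDef :=
  PosDef.posSemidef_add hT (PosDef.one.smul (by exact_mod_cast hε))

theorem re_trace_inv_add_smul_one_mul_mul_self_le {T : Matrix n n ℂ} (hT : T.PosSemidef) {ε : ℝ}
    (hε : 0 < ε) : ((T + (ε : ℂ) • 1)⁻¹ * (T * T)).trace.re ≤ T.trace.re := by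
  have hY := hT.posDef_add_smul_one hε
  have hsplit : (T + (ε : ℂ) • 1)⁻¹ * ((T + (ε : ℂ) • 1) * T) = T :=
    nonsing_inv_mul_cancel_left _ _ ((isUnit_iff_isUnit_det _).mp hY.isUnit)
  rw [Matrix.add_mul, Matrix.smul_mul, Matrix.one_mul, Matrix.mul_add, Matrix.mul_smul] at hsplit
  have h0 := (Complex.nonneg_iff.mp (hY.inv.posSemidef.trace_mul_nonneg hT)).1
  conv_rhs => rw [← hsplit]
  rw [trace_add, trace_smul, Complex.add_re, smul_eq_mul, Complex.re_ofReal_mul]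
  nlinarith

theorem re_trace_le_re_trace_sqrt {S Z : Matrix n n ℂ} (hZ : Z * Zᴴ ≤ S) :
    Z.trace.re ≤ (CFC.sqrt S).trace.re := by
  have hS : 0 ≤ S := (posSemidef_self_mul_conjTranspose Z).nonneg.trans hZ
  set T := CFC.sqrt S
  have hT : T.PosSemidef := (CFC.sqrt_nonneg S).posSemidef
  have hTT : T * T = S := CFC.sqrt_mul_sqrt_self S
  suffices h : ∀ ε : ℝ, 0 < ε → 2 * Z.trace.re ≤ 2 * T.trace.re + ε * Fintype.card n by
    refine le_of_forall_pos_le_add fun δ hδ => ?_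
    have := h (δ / (Fintype.card n + 1)) (by positivity)
    have hc : δ / (Fintype.card n + 1) * Fintype.card n ≤ δ := by
      rw [div_mul_eq_mul_div, div_le_iff₀ (by positivity)]
      nlinarith
    linarith
  intro ε hε
  -- `Y = √S + ε` nearly minimises `tr Y + tr (Y⁻¹ S) ≥ 2 tr √S`, and
  -- `0 ≤ tr ((Z - Y)ᴴ Y⁻¹ (Z - Y))` bounds `2 Re tr Z` by `tr Y + tr (Y⁻¹ Z Zᴴ)`.
  set Y := T + (ε : ℂ) • 1
  have hY : Y.PosDef := hT.posDef_add_smul_one hε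
  have hdet : IsUnit Y.det := (isUnit_iff_isUnit_det _).mp hY.isUnit
  have hsq : (Z - Y)ᴴ * Y⁻¹ * (Z - Y) = Zᴴ * Y⁻¹ * Z - Zᴴ - Z + Y := by
    rw [conjTranspose_sub, hY.isHermitian.eq]
    simp only [Matrix.sub_mul, Matrix.mul_sub, Matrix.mul_assoc, nonsing_inv_mul _ hdet,
      mul_nonsing_inv_cancel_left _ _ hdet, Matrix.mul_one]
    abel
  have h1 := (hY.inv.posSemidef.conjTranspose_mul_mul_same (Z - Y)).trace_nonneg
  rw [hsq, trace_add, trace_sub, trace_sub] at h1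
  have h2 : (Zᴴ * Y⁻¹ * Z).trace.re ≤ (Y⁻¹ * (T * T)).trace.re := by
    have := (Complex.nonneg_iff.mp (hY.inv.posSemidef.trace_mul_nonneg (le_iff.mp hZ))).1
    rw [Matrix.mul_assoc, trace_mul_comm, Matrix.mul_assoc, hTT]
    rw [Matrix.mul_sub, trace_sub, Complex.sub_re] at this
    linarith
  have h3 := re_trace_inv_add_smul_one_mul_mul_self_le hT hε
  have hY : Y.trace.re = T.trace.re + ε * Fintype.card n := by
    simp [Y, trace_add, trace_smul, trace_one]
  have h1 := (Complex.nonneg_iff.mp h1).1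
  simp only [Complex.add_re, Complex.sub_re, trace_conjTranspose, Complex.star_def,
    Complex.conj_re] at h1
  linarith

end Matrix

theorem psqrt_eq_sqrt {d : ℕ} (A : Matrix (Fin d) (Fin d) ℂ) : psqrt A = CFC.sqrt A := by
  unfold psqrt
  split_ifs with h
  · have : 0 ≤ A := h.nonneg
    rw [CFC.sqrt_eq_cfc, cfc_nnreal_eq_real _ A, h.1.cfc_eq]
    simp only [IsHermitian.cfc, Unitary.conjStarAlgAut_apply]
    congr 3
    funext i
    simp [max_eq_left (h.eigenvalues_nonneg i)]
  · exact (CFC.sqrt_of_not_nonneg fun h' => h h'.posSemidef).symm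

theorem fidelity_eq_re_trace_sqrt {d : ℕ} (ρ σ : Matrix (Fin d) (Fin d) ℂ) :
    fidelity ρ σ = (CFC.sqrt (CFC.sqrt ρ * σ * CFC.sqrt ρ)).trace.re := by
  simp only [fidelity, psqrt_eq_sqrt]

theorem le_fidelity_add_add_of_posDef {d : ℕ} {A B C : Matrix (Fin d) (Fin d) ℂ}
    (hA : A.PosSemidef) (hB : B.PosSemidef) (hC : C.PosSemidef) (hAB : (A + B).PosDef) :
    A.trace.re + (CFC.sqrt B * CFC.sqrt C).trace.re ≤ fidelity (A + B) (A + C) := by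
  have hA' := hA.nonneg
  have hB' := hB.nonneg
  have hC' := hC.nonneg
  have hAB' := hAB.posSemidef.nonneg
  set P := CFC.sqrt (A + B)
  have hPP : P * P = A + B := CFC.sqrt_mul_sqrt_self _
  have hP : IsSelfAdjoint P := (CFC.sqrt_nonneg _).isSelfAdjoint
  have hPh : Pᴴ = P := hP.star_eq
  have hPdet : IsUnit P.det := by
    refine isUnit_of_mul_isUnit_left (y := P.det) ?_
    rw [← det_mul, hPP]
    exact (isUnit_iff_isUnit_det _).mp hAB.isUnit
  have hsq : ∀ M : Matrix (Fin d) (Fin d) ℂ, 0 ≤ M → (CFC.sqrt M)ᴴ = CFC.sqrt M :=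
    fun M _ => (CFC.sqrt_nonneg M).isSelfAdjoint.star_eq
  set Y := fromCols (CFC.sqrt A) (CFC.sqrt B)
  set X := fromRows (CFC.sqrt A) (CFC.sqrt C)
  have hYY : Y * Yᴴ = A + B := by
    simp only [Y, conjTranspose_fromCols_eq_fromRows_conjTranspose, fromCols_mul_fromRows,
      hsq A hA', hsq B hB', CFC.sqrt_mul_sqrt_self A, CFC.sqrt_mul_sqrt_self B]
  have hXX : Xᴴ * X = A + C := by
    simp only [X, conjTranspose_fromRows_eq_fromCols_conjTranspose, fromCols_mul_fromRows,
      hsq A hA', hsq C hC', CFC.sqrt_mul_sqrt_self A, CFC.sqrt_mul_sqrt_self C]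
  have hYX : Y * X = A + CFC.sqrt B * CFC.sqrt C := by
    simp only [Y, X, fromCols_mul_fromRows, CFC.sqrt_mul_sqrt_self A]
  have hZ : (P * (Y * X)ᴴ * P⁻¹) * (P * (Y * X)ᴴ * P⁻¹)ᴴ ≤ P * (A + C) * P := by
    calc (P * (Y * X)ᴴ * P⁻¹) * (P * (Y * X)ᴴ * P⁻¹)ᴴ
        = P * ((Y * X)ᴴ * (Y * Yᴴ)⁻¹ * (Y * X)) * P := by
          rw [hYY, ← hPP, Matrix.mul_inv_rev]
          simp only [conjTranspose_mul, conjTranspose_nonsing_inv, conjTranspose_conjTranspose,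
            hPh, Matrix.mul_assoc]
      _ ≤ P * (Xᴴ * X) * P :=
          hP.conjugate_le_conjugate (conjTranspose_mul_inv_mul_le Y X (hYY ▸ hAB))
      _ = P * (A + C) * P := by rw [hXX]
  rw [fidelity_eq_re_trace_sqrt]
  refine le_of_eq_of_le ?_ (re_trace_le_re_trace_sqrt hZ)
  rw [Matrix.mul_assoc, trace_mul_comm P, nonsing_inv_mul_cancel_right _ _ hPdet,
    trace_conjTranspose, hYX, trace_add]
  simp

section Continuity

open scoped Matrix.Norms.L2Operator
open Filter Topology

theorem continuousOn_fidelity_left {d : ℕ} {σ : Matrix (Fin d) (Fin d) ℂ} (hσ : σ.PosSemidef) :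
    ContinuousOn (fun ρ => fidelity ρ σ) {ρ | 0 ≤ ρ} := by
  simp_rw [fidelity_eq_re_trace_sqrt]
  have hconj : ContinuousOn (fun ρ : Matrix (Fin d) (Fin d) ℂ => CFC.sqrt ρ * σ * CFC.sqrt ρ)
      {ρ | 0 ≤ ρ} :=
    (CFC.continuousOn_sqrt.mul continuousOn_const).mul CFC.continuousOn_sqrt
  have hmaps : Set.MapsTo (fun ρ : Matrix (Fin d) (Fin d) ℂ => CFC.sqrt ρ * σ * CFC.sqrt ρ)
      {ρ | 0 ≤ ρ} {ρ | 0 ≤ ρ} :=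
    fun ρ _ => conjugate_nonneg_of_nonneg hσ.nonneg (CFC.sqrt_nonneg ρ)
  exact Complex.continuous_re.comp_continuousOn
    ((continuous_id.matrix_trace).comp_continuousOn (CFC.continuousOn_sqrt.comp hconj hmaps))

theorem le_fidelity_add_add {d : ℕ} {A B C : Matrix (Fin d) (Fin d) ℂ}
    (hA : A.PosSemidef) (hB : B.PosSemidef) (hC : C.PosSemidef) :
    A.trace.re + (CFC.sqrt B * CFC.sqrt C).trace.re ≤ fidelity (A + B) (A + C) := by
  have hshift : Tendsto (fun δ : ℝ => A + (B + (δ : ℂ) • 1)) (𝓝[>] 0)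
      (𝓝[{ρ | 0 ≤ ρ}] (A + B)) := by
    refine tendsto_nhdsWithin_iff.mpr ⟨?_, eventually_nhdsWithin_of_forall fun δ hδ => ?_⟩
    · have : Continuous fun δ : ℝ => A + (B + (δ : ℂ) • 1) := by fun_prop
      simpa using (this.tendsto 0).mono_left nhdsWithin_le_nhds
    · exact (hA.add (hB.posDef_add_smul_one hδ).posSemidef).nonneg
  refine ge_of_tendsto (((continuousOn_fidelity_left (hA.add hC)) _
    (hA.add hB).nonneg).tendsto.comp hshift) (eventually_nhdsWithin_of_forall fun δ hδ => ?_)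
  have hBδ := hB.posDef_add_smul_one hδ
  have hmono : CFC.sqrt B ≤ CFC.sqrt (B + (δ : ℂ) • 1) :=
    CFC.sqrt_le_sqrt _ _ <| le_add_of_nonneg_right <|
      (PosSemidef.one.smul (Complex.zero_le_real.mpr hδ.le)).nonneg
  have := (Complex.nonneg_iff.mp (PosSemidef.trace_mul_nonneg hmono
    (CFC.sqrt_nonneg C).posSemidef)).1
  rw [Matrix.sub_mul, trace_sub, Complex.sub_re] at this
  have := le_fidelity_add_add_of_posDef hA hBδ.posSemidef hC (hBδ.posSemidef_add hA)
  simp only [Function.comp_apply]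
  linarith

end Continuity

theorem mul_eq_zero_of_fidelity_add_add_eq_trace {d : ℕ} {A B C : Matrix (Fin d) (Fin d) ℂ}
    (hA : A.PosSemidef) (hB : B.PosSemidef) (hC : C.PosSemidef)
    (h : fidelity (A + B) (A + C) = A.trace.re) : B * C = 0 := by
  have hB' := hB.nonneg
  have hC' := hC.nonneg
  have hsB := (CFC.sqrt_nonneg B).posSemidef
  have hsC := (CFC.sqrt_nonneg C).posSemidef
  have hle := le_fidelity_add_add hA hB hC
  obtain ⟨hre, him⟩ := Complex.nonneg_iff.mp (hsB.trace_mul_nonneg hsC)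
  have hsqrt := hsB.mul_eq_zero_of_trace_mul_eq_zero hsC (Complex.ext (by simp; linarith)
    (by simpa using him.symm))
  calc B * C = CFC.sqrt B * (CFC.sqrt B * CFC.sqrt C) * CFC.sqrt C := by
        rw [← Matrix.mul_assoc, CFC.sqrt_mul_sqrt_self B, Matrix.mul_assoc,
          CFC.sqrt_mul_sqrt_self C]
    _ = 0 := by rw [hsqrt, Matrix.mul_zero, Matrix.zero_mul]

theorem Finset.sum_sdiff_singleton_eq_sum_sdiff_pair_add {ι M : Type*} [Fintype ι]
    [DecidableEq ι] [AddCommMonoid M] (f : ι → M) {j l : ι} (h : j ≠ l) :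
    ∑ i ∈ Finset.univ \ {j}, f i = ∑ i ∈ Finset.univ \ {j, l}, f i + f l := by
  rw [← Finset.sum_erase_add _ _ (by simp [h.symm] : l ∈ Finset.univ \ {j}),
    ← Finset.sdiff_singleton_eq_erase, sdiff_sdiff_left, Finset.insert_eq]
  rfl

theorem trace_sum_univ_sdiff_pair {d k : ℕ} (ρ : Fin k → Matrix (Fin d) (Fin d) ℂ)
    (hρtr : ∀ i, (ρ i).trace = 1) {j l : Fin k} (hjl : j ≠ l) :
    (∑ i ∈ Finset.univ \ {j, l}, ρ i).trace = ((k - 2 : ℕ) : ℂ) := by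
  rw [trace_sum, Finset.sum_congr rfl fun i _ => hρtr i, Finset.sum_const,
    Finset.card_univ_sdiff, Finset.card_pair hjl, Fintype.card_fin, nsmul_one]

theorem orthogonal_of_fidelity_of_leave_one_out_general
    {d k : ℕ} (ρ : Fin k → Matrix (Fin d) (Fin d) ℂ)
    (hρ : ∀ i, (ρ i).PosSemidef) (hρtr : ∀ i, (ρ i).trace = 1)
    (ρhat : Fin k → Matrix (Fin d) (Fin d) ℂ)
    (hρhat : ∀ j, ρhat j = ((k : ℂ) - 1)⁻¹ • ∑ i ∈ Finset.univ \ {j}, ρ i)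
    (hfid : ∀ j l, j ≠ l → fidelity (ρhat j) (ρhat l) = ((k : ℝ) - 2) / ((k : ℝ) - 1)) :
    ∀ j l, j ≠ l → (ρ j * ρ l).trace = 0 := by
  intro j l hjl
  have hk : 2 ≤ k := by
    have := Fin.val_ne_of_ne hjl
    omega
  set r : ℝ := ((k : ℝ) - 1)⁻¹
  have hr : 0 < r := inv_pos.mpr (by simp only [sub_pos, Nat.one_lt_cast]; omega)
  have hr' : (0 : ℂ) ≤ r := Complex.zero_le_real.mpr hr.le
  simp only [show ((k : ℂ) - 1)⁻¹ = r by simp [r]] at hρhat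
  set A := (r : ℂ) • ∑ i ∈ Finset.univ \ {j, l}, ρ i
  have hA : A.PosSemidef := (posSemidef_sum _ fun i _ => hρ i).smul hr'
  have htrA : A.trace.re = ((k : ℝ) - 2) / ((k : ℝ) - 1) := by
    rw [trace_smul, trace_sum_univ_sdiff_pair ρ hρtr hjl, smul_eq_mul, ← Complex.ofReal_natCast,
      ← Complex.ofReal_mul, Complex.ofReal_re, Nat.cast_sub hk, inv_mul_eq_div, Nat.cast_two]
  have hj : ρhat j = A + (r : ℂ) • ρ l := by
    rw [hρhat, Finset.sum_sdiff_singleton_eq_sum_sdiff_pair_add _ hjl, smul_add]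
  have hl : ρhat l = A + (r : ℂ) • ρ j := by
    rw [hρhat, Finset.sum_sdiff_singleton_eq_sum_sdiff_pair_add _ hjl.symm, Finset.pair_comm,
      smul_add]
  have hlj := mul_eq_zero_of_fidelity_add_add_eq_trace hA ((hρ l).smul hr') ((hρ j).smul hr')
    (by rw [← hj, ← hl, hfid j l hjl, htrA])
  rw [smul_mul_smul_comm, smul_eq_zero] at hlj
  rw [trace_mul_comm, hlj.resolve_left (by exact_mod_cast (mul_pos hr hr).ne'), trace_zero]

/-- If the uniform mixtures `ρ̂ⱼ = (1/(k-1)) ∑_{i≠j} ρᵢ` satisfy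
`F(ρ̂ⱼ, ρ̂ₗ) = (k-2)/(k-1)` for all `j ≠ l`, then the density matrices `ρᵢ`
are pairwise orthogonal. -/
theorem orthogonal_of_fidelity_of_leave_one_out
    {d k : ℕ} (hk : 3 ≤ k) (ρ : Fin k → Matrix (Fin d) (Fin d) ℂ)
    (hρ : ∀ i, (ρ i).PosSemidef) (hρtr : ∀ i, (ρ i).trace = 1)
    (ρhat : Fin k → Matrix (Fin d) (Fin d) ℂ)
    (hρhat : ∀ j, ρhat j = ((k : ℂ) - 1)⁻¹ • ∑ i ∈ Finset.univ \ {j}, ρ i)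
    (hfid : ∀ j l, j ≠ l → fidelity (ρhat j) (ρhat l) = ((k : ℝ) - 2) / ((k : ℝ) - 1)) :
    ∀ j l, j ≠ l → (ρ j * ρ l).trace = 0 :=
  orthogonal_of_fidelity_of_leave_one_out_general ρ hρ hρtr ρhat hρhat hfid
end

section
/- Let n ≥ 1 and 0 ≤ θ < π. With Ψ_x, ζ_x ∈ ℂ^{2^n} as defined by Ψ_x(r) = (−1)^{x·r} cos(θ/2)^{n−|r|} sin(θ/2)^{|r|} and ζ_x(0⃗) = 1/√(2^n), ζ_x(r) = −(−1)^{x·r}/√(2^n) for r ≠ 0⃗, the matrix N = ∑_{x∈{0,1}^n} 2^{−n} |Ψ_x⟩⟨Ψ_x|ζ_x⟩⟨ζ_x| is the diagonal matrix C(θ)·(E_{0⃗,0⃗} − ∑_{r≠0⃗} tan(θ/2)^{|r|} E_{r,r}), where C(θ) = 2^{−n} cos(θ/2)^{2n} (2 − (1 + tan(θ/2))^n) and E_{r,r} is the diagonal matrix unit at index r. In particular, tr(N) = 2^{−n} cos(θ/2)^{2n} (2 − (1 + tan(θ/2))^n)². -/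
/-!
Both families are a fixed vector multiplied pointwise by the character `χₓ(r) = (-1)^{x·r}`:
`Ψₓ = χₓ · a` with `a(r) = cos(θ/2)^{n-|r|} sin(θ/2)^{|r|} = cos(θ/2)^n tan(θ/2)^{|r|}`, and
`ζₓ = χₓ · b` with `b(0⃗) = 2^{-n/2}`, `b(r) = -2^{-n/2}` otherwise. Hence `⟨Ψₓ|ζₓ⟩ = ⟨a|b⟩` does
not depend on `x`, and by orthogonality of characters the average of `|χₓ a⟩⟨χₓ b|` over `x` is
the diagonal matrix with entries `a(r) b(r)`. What is left are the binomial sums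
`∑ᵣ tan(θ/2)^{|r|} = (1 + tan(θ/2))^n`.
-/

open BigOperators Matrix

/-- The dot product `x·r = ∑ᵢ xᵢ rᵢ` of two bit strings. -/
def bdot {n : ℕ} (x r : Fin n → Bool) : ℕ :=
  ∑ i, if x i ∧ r i then 1 else 0

/-- The Hamming weight `|r| = ∑ᵢ rᵢ` of a bit string. -/
def hamming {n : ℕ} (r : Fin n → Bool) : ℕ :=
  ∑ i, if r i then 1 else 0

open Finset

lemma Real.cos_pow_sub_mul_sin_pow {x : ℝ} (hx : Real.cos x ≠ 0) {k n : ℕ} (hk : k ≤ n) :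
    Real.cos x ^ (n - k) * Real.sin x ^ k = Real.cos x ^ n * Real.tan x ^ k := by
  rw [Real.tan_eq_sin_div_cos, div_pow, ← Nat.sub_add_cancel hk, pow_add, Nat.add_sub_cancel]
  field_simp

lemma sum_ite_eq_neg {ι R : Type*} [Fintype ι] [DecidableEq ι] [CommRing R] (f : ι → R)
    (z : ι) :
    ∑ i, (if i = z then f i else -f i) = 2 * f z - ∑ i, f i := by
  rw [Fintype.sum_eq_add_sum_compl z, Fintype.sum_eq_add_sum_compl z f, if_pos rfl,
    sum_congr rfl fun i hi => if_neg (mem_compl.mp hi ∘ mem_singleton.mpr), sum_neg_distrib]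
  ring

lemma star_neg_one_pow_mul_mul_neg_one_pow_mul {R : Type*} [CommRing R] [StarRing R] (k : ℕ)
    (a b : R) : star ((-1) ^ k * a) * ((-1) ^ k * b) = star a * b := by
  rw [star_mul', star_pow, star_neg, star_one, mul_mul_mul_comm, ← mul_pow, neg_one_mul, neg_neg,
    one_pow, one_mul]

section BitStrings

variable {n : ℕ}

lemma hamming_eq_card (r : Fin n → Bool) : hamming r = #{i | r i} := by
  rw [hamming, card_filter]

lemma hamming_le (r : Fin n → Bool) : hamming r ≤ n :=
  (hamming_eq_card r).trans_le <| (card_filter_le _ _).trans_eq (card_fin n)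

@[simp]
lemma hamming_const_false : hamming (fun _ : Fin n => false) = 0 := by
  simp [hamming]

@[simp]
lemma bdot_const_false_right (x : Fin n → Bool) : bdot x (fun _ => false) = 0 := by
  simp [bdot]

lemma prod_ite_eq_pow_sub_hamming_mul_pow_hamming {M : Type*} [CommMonoid M] (a b : M)
    (r : Fin n → Bool) :
    ∏ i, (if r i then b else a) = a ^ (n - hamming r) * b ^ hamming r := by
  have hcard : #{i | ¬r i = true} = n - hamming r := by
    have h := card_filter_add_card_filter_not (s := univ) (fun i => r i = true)
    rw [card_univ, Fintype.card_fin] at h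
    rw [hamming_eq_card]
    omega
  rw [prod_ite, prod_const, prod_const, hcard, hamming_eq_card, mul_comm]

lemma sum_pow_sub_hamming_mul_pow_hamming {R : Type*} [CommSemiring R] (a b : R) :
    ∑ r : Fin n → Bool, a ^ (n - hamming r) * b ^ hamming r = (a + b) ^ n := by
  simp_rw [← prod_ite_eq_pow_sub_hamming_mul_pow_hamming]
  rw [← Fintype.prod_sum (fun _ (c : Bool) => if c then b else a)]
  simp [add_comm]

lemma sum_pow_hamming {R : Type*} [CommSemiring R] (t : R) :
    ∑ r : Fin n → Bool, t ^ hamming r = (1 + t) ^ n := by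
  simpa using sum_pow_sub_hamming_mul_pow_hamming (n := n) 1 t

lemma sum_pow_hamming_mul_ite_neg {R : Type*} [CommRing R] (t a : R) :
    ∑ r : Fin n → Bool, t ^ hamming r * (if r = (fun _ => false) then a else -a)
      = a * (2 - (1 + t) ^ n) := by
  simp_rw [mul_ite, mul_neg]
  rw [sum_ite_eq_neg, ← sum_mul, sum_pow_hamming, hamming_const_false, pow_zero]
  ring

lemma neg_one_pow_bdot_eq_prod {R : Type*} [CommRing R] (x r : Fin n → Bool) :
    (-1 : R) ^ bdot x r = ∏ i, (-1 : R) ^ (if x i ∧ r i then 1 else 0) := by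
  rw [bdot, prod_pow_eq_pow_sum]

theorem sum_neg_one_pow_bdot_mul_neg_one_pow_bdot {R : Type*} [CommRing R] (p q : Fin n → Bool) :
    ∑ x : Fin n → Bool, (-1 : R) ^ bdot x p * (-1) ^ bdot x q = if p = q then 2 ^ n else 0 := by
  simp_rw [neg_one_pow_bdot_eq_prod, ← prod_mul_distrib]
  rw [← Fintype.prod_sum (fun i (c : Bool) =>
    (-1 : R) ^ (if c ∧ p i then 1 else 0) * (-1) ^ (if c ∧ q i then 1 else 0))]
  simp only [Fintype.sum_bool]
  split_ifs with hpq
  · subst hpq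
    calc _ = ∏ _i : Fin n, (2 : R) := prod_congr rfl fun i _ => by cases p i <;> norm_num
      _ = 2 ^ n := by simp
  · obtain ⟨i, hi⟩ := Function.ne_iff.mp hpq
    refine prod_eq_zero (mem_univ i) ?_
    cases hp : p i <;> cases hq : q i <;> simp_all

theorem sum_smul_vecMulVec_neg_one_pow_bdot_eq_diagonal {K : Type*} [Field K] [StarRing K]
    [CharZero K] (a b : (Fin n → Bool) → K) :
    ∑ x : Fin n → Bool, ((2 : K) ^ n)⁻¹ •
      (∑ s, starRingEnd K ((-1) ^ bdot x s * a s) * ((-1) ^ bdot x s * b s)) •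
        vecMulVec (fun r => (-1) ^ bdot x r * a r)
          (fun q => starRingEnd K ((-1) ^ bdot x q * b q))
      = diagonal fun r => (∑ s, starRingEnd K (a s) * b s) * (a r * starRingEnd K (b r)) := by
  simp only [starRingEnd_apply, star_neg_one_pow_mul_mul_neg_one_pow_mul]
  ext p q
  simp only [Matrix.sum_apply, Matrix.smul_apply, vecMulVec_apply, smul_eq_mul, star_mul',
    star_pow, star_neg, star_one]
  have hcomm : ∀ x : Fin n → Bool, ((2 : K) ^ n)⁻¹ * ((∑ s, star (a s) * b s) *
      ((-1) ^ bdot x p * a p * ((-1) ^ bdot x q * star (b q))))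
      = ((2 : K) ^ n)⁻¹ * (∑ s, star (a s) * b s) * (a p * star (b q)) *
        ((-1) ^ bdot x p * (-1) ^ bdot x q) := fun x => by ring
  rw [sum_congr rfl fun x _ => hcomm x, ← mul_sum, sum_neg_one_pow_bdot_mul_neg_one_pow_bdot,
    diagonal_apply]
  split_ifs with hpq
  · subst hpq
    field_simp
  · rw [mul_zero]

end BitStrings

theorem pbr_dual_certificate_diagonal_general
    {n : ℕ} (θ : ℝ) (hθ0 : 0 ≤ θ) (hθ1 : θ < Real.pi)
    (Ψ ζ : (Fin n → Bool) → (Fin n → Bool) → ℂ)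
    (hΨ : ∀ x r, Ψ x r = (-1 : ℂ) ^ bdot x r *
      ((Real.cos (θ / 2) ^ (n - hamming r) * Real.sin (θ / 2) ^ hamming r : ℝ) : ℂ))
    (hζ : ∀ x r, ζ x r =
      if r = (fun _ => false) then ((1 / Real.sqrt (2 ^ n) : ℝ) : ℂ)
      else -(-1 : ℂ) ^ bdot x r * ((1 / Real.sqrt (2 ^ n) : ℝ) : ℂ))
    (N : Matrix (Fin n → Bool) (Fin n → Bool) ℂ)
    (hN : N = ∑ x, ((2 : ℂ) ^ n)⁻¹ •
      (∑ s, (starRingEnd ℂ) (Ψ x s) * ζ x s) •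
        Matrix.vecMulVec (Ψ x) (fun q => (starRingEnd ℂ) (ζ x q)))
    (C : ℝ)
    (hC : C = (2 ^ n : ℝ)⁻¹ * Real.cos (θ / 2) ^ (2 * n) *
      (2 - (1 + Real.tan (θ / 2)) ^ n)) :
    N = Matrix.diagonal (fun r =>
        if r = (fun _ => false) then (C : ℂ)
        else -(C : ℂ) * ((Real.tan (θ / 2) ^ hamming r : ℝ) : ℂ)) ∧
    N.trace = (((2 ^ n : ℝ)⁻¹ * Real.cos (θ / 2) ^ (2 * n) *
      (2 - (1 + Real.tan (θ / 2)) ^ n) ^ 2 : ℝ) : ℂ) := by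
  set c := Real.cos (θ / 2)
  set t := Real.tan (θ / 2)
  set u : ℝ := 1 / Real.sqrt (2 ^ n)
  set z : Fin n → Bool := fun _ => false
  have hc : c ≠ 0 := (Real.cos_pos_of_mem_Ioo ⟨by linarith [Real.pi_pos], by linarith⟩).ne'
  have hu : u ^ 2 = (2 ^ n)⁻¹ := by
    rw [div_pow, Real.sq_sqrt (by positivity), one_pow, one_div]
  have hΨ' : Ψ = fun x r => (-1) ^ bdot x r * ((c ^ n * t ^ hamming r : ℝ) : ℂ) := by
    ext x r
    rw [hΨ, Real.cos_pow_sub_mul_sin_pow hc (hamming_le r)]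
  have hζ' : ζ = fun x r => (-1) ^ bdot x r * ((if r = z then u else -u : ℝ) : ℂ) := by
    ext x r
    rw [hζ]
    split_ifs with hr
    · simp [hr, z]
    · push_cast; ring
  have hinner : ∑ s, c ^ n * t ^ hamming s * (if s = z then u else -u)
      = c ^ n * (u * (2 - (1 + t) ^ n)) := by
    rw [← sum_pow_hamming_mul_ite_neg, mul_sum]
    exact sum_congr rfl fun s _ => mul_assoc _ _ _
  have hdiag :
      N = Matrix.diagonal fun r => ((t ^ hamming r * (if r = z then C else -C) : ℝ) : ℂ) := by
    rw [hN, hΨ', hζ', sum_smul_vecMulVec_neg_one_pow_bdot_eq_diagonal]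
    congr 1
    ext r
    simp only [Complex.conj_ofReal, ← Complex.ofReal_mul, ← Complex.ofReal_sum, hinner]
    rw [Complex.ofReal_inj, hC]
    split_ifs
    · linear_combination c ^ n * c ^ n * (2 - (1 + t) ^ n) * t ^ hamming r * hu
    · linear_combination -c ^ n * c ^ n * (2 - (1 + t) ^ n) * t ^ hamming r * hu
  refine ⟨hdiag.trans (congrArg Matrix.diagonal (funext fun r => ?_)), ?_⟩
  · split_ifs with hr
    · simp [hr, z]
    · push_cast; ring
  · rw [hdiag, Matrix.trace_diagonal, ← Complex.ofReal_sum, sum_pow_hamming_mul_ite_neg, hC]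
    push_cast
    ring

/-- The dual certificate `N = ∑ₓ 2^{-n} |Ψₓ⟩⟨Ψₓ|ζₓ⟩⟨ζₓ|` for the PBR game is the
diagonal matrix with entry `C(θ)` at index `0⃗` and `-C(θ) tan(θ/2)^{|r|}` at each
index `r ≠ 0⃗`, where `C(θ) = 2^{-n} cos(θ/2)^{2n} (2 - (1 + tan(θ/2))^n)`; in
particular `tr(N) = 2^{-n} cos(θ/2)^{2n} (2 - (1 + tan(θ/2))^n)²`. -/
theorem pbr_dual_certificate_diagonal
    {n : ℕ} (hn : 1 ≤ n) (θ : ℝ) (hθ0 : 0 ≤ θ) (hθ1 : θ < Real.pi)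
    (Ψ ζ : (Fin n → Bool) → (Fin n → Bool) → ℂ)
    (hΨ : ∀ x r, Ψ x r = (-1 : ℂ) ^ bdot x r *
      ((Real.cos (θ / 2) ^ (n - hamming r) * Real.sin (θ / 2) ^ hamming r : ℝ) : ℂ))
    (hζ : ∀ x r, ζ x r =
      if r = (fun _ => false) then ((1 / Real.sqrt (2 ^ n) : ℝ) : ℂ)
      else -(-1 : ℂ) ^ bdot x r * ((1 / Real.sqrt (2 ^ n) : ℝ) : ℂ))
    (N : Matrix (Fin n → Bool) (Fin n → Bool) ℂ)
    (hN : N = ∑ x, ((2 : ℂ) ^ n)⁻¹ •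
      (∑ s, (starRingEnd ℂ) (Ψ x s) * ζ x s) •
        Matrix.vecMulVec (Ψ x) (fun q => (starRingEnd ℂ) (ζ x q)))
    (C : ℝ)
    (hC : C = (2 ^ n : ℝ)⁻¹ * Real.cos (θ / 2) ^ (2 * n) *
      (2 - (1 + Real.tan (θ / 2)) ^ n)) :
    N = Matrix.diagonal (fun r =>
        if r = (fun _ => false) then (C : ℂ)
        else -(C : ℂ) * ((Real.tan (θ / 2) ^ hamming r : ℝ) : ℂ)) ∧
    N.trace = (((2 ^ n : ℝ)⁻¹ * Real.cos (θ / 2) ^ (2 * n) *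
      (2 - (1 + Real.tan (θ / 2)) ^ n) ^ 2 : ℝ) : ℂ) :=
  pbr_dual_certificate_diagonal_general θ hθ0 hθ1 Ψ ζ hΨ hζ N hN C hC
end
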